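/- arXiv:1004.0128 — 2 statements merged into one kernel-verified Lean document; each statement's English description precedes it below -/
import Mathlib

section
/- If H is an almost malnormal subgroup of a group G₁ (i.e., H ∩ gHg⁻¹ is finite for all g ∈ G₁ \ H), then H is almost malnormal in the free product G₁ * G₂ for any group G₂. -/
/-!
A factor of a free product is malnormal: if `g * x * g⁻¹ = y` with `x ≠ 1` and `x, y` in the
factor `G i`, then `g ∈ G i`. Indeed, write `g⁻¹ = a * t` with `a ∈ G i` and `t` a reduced word not
starting in `G i`; if `t ≠ 1`, then `t⁻¹ (a⁻¹ x a) t` is a reduced word of length at least three,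
so it is not a single letter. Hence for `g ∉ G₁` only `h = 1` can lie in `H ∩ g⁻¹ H g`, while for
`g ∈ G₁` the set is the image of the finite one in `G₁`.
-/

open Monoid

namespace Monoid.CoprodI

variable {ι : Type*}

theorem Word.prod_injective {M : ι → Type*} [∀ i, Monoid (M i)] :
    Function.Injective (Word.prod : Word M → CoprodI M) := by
  classical
  exact Word.equiv.symm.injective

namespace NeWord

variable {M : ι → Type*} [∀ i, Monoid (M i)]

theorem fstIdx_toWord {i j : ι} (w : NeWord M i j) : w.toWord.fstIdx = some i := by
  simp [Word.fstIdx, toWord]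

theorem prod_ne_of_of_one_lt_length {i j k : ι} (w : NeWord M i j)
    (hw : 1 < w.toList.length) (m : M k) : w.prod ≠ of m := by
  intro h
  by_cases hm : m = 1
  · subst hm
    have : w.toWord = Word.empty := Word.prod_injective (by simpa [prod] using h)
    exact w.toList_ne_nil (congrArg Word.toList this)
  · have : w.toWord = (singleton m hm).toWord := Word.prod_injective (by
      rw [← prod, h, ← prod_singleton m hm, prod])
    have := congrArg (fun v : Word M => v.toList.length) this
    simp [toWord] at this
    omega

end NeWord

variable {G : ι → Type*} [∀ i, Group (G i)]

theorem exists_eq_of_of_mul_of_mul_inv_eq_of {i : ι} {g : CoprodI G} {x y : G i} (hx : x ≠ 1)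
    (h : g * of x * g⁻¹ = of y) : ∃ z : G i, g = of z := by
  classical
  set p := Word.equivPair i (Word.equiv g⁻¹)
  have hg : g⁻¹ = of p.head * p.tail.prod := by
    rw [← Word.prod_smul, Word.equivPair_head_smul_equivPair_tail]
    exact (Word.equiv.symm_apply_apply g⁻¹).symm
  by_cases ht : p.tail = Word.empty
  · exact ⟨p.head⁻¹, by rw [← inv_inv g, hg, ht, Word.prod_empty, mul_one, map_inv]⟩
  obtain ⟨l, k, s, hs⟩ := NeWord.of_word p.tail ht
  have hli : l ≠ i := fun hli => p.fstIdx_ne (by rw [← hs, NeWord.fstIdx_toWord, hli])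
  have hx' : p.head⁻¹ * x * p.head ≠ 1 := by
    simpa using (conj_eq_one_iff (a := p.head⁻¹)).not.mpr hx
  set W := ((s.inv.append hli (.singleton _ hx')).append hli.symm s)
  refine absurd ?_ (W.prod_ne_of_of_one_lt_length ?_ y)
  · have hsp : s.prod = p.tail.prod := by rw [NeWord.prod, hs]
    rw [NeWord.append_prod, NeWord.append_prod, NeWord.inv_prod, NeWord.prod_singleton, hsp, ← h,
      ← inv_inv g, hg]
    simp only [map_mul, map_inv]
    group
  · simp only [W, NeWord.toList, List.length_append, List.length_singleton]
    have := List.length_pos_of_ne_nil s.toList_ne_nil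
    omega

end Monoid.CoprodI

namespace Monoid.Coprod

universe u v

/-- `G₁ ∗ G₂` embeds into the `Bool`-indexed free product; the `ULift`s bring both factors into
one universe. -/
def boolFamily (G₁ : Type u) (G₂ : Type v) : Bool → Type (max u v)
  | true => ULift.{v} G₁
  | false => ULift.{u} G₂

variable {G₁ : Type u} {G₂ : Type v} [Group G₁] [Group G₂]

instance : ∀ b, Group (boolFamily G₁ G₂ b)
  | true => inferInstanceAs (Group (ULift G₁))
  | false => inferInstanceAs (Group (ULift G₂))

def toCoprodI : Coprod G₁ G₂ →* CoprodI (boolFamily G₁ G₂) :=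
  lift ((CoprodI.of (i := true)).comp MulEquiv.ulift.symm.toMonoidHom)
    ((CoprodI.of (i := false)).comp MulEquiv.ulift.symm.toMonoidHom)

def ofCoprodI : CoprodI (boolFamily G₁ G₂) →* Coprod G₁ G₂ :=
  CoprodI.lift fun
    | true => inl.comp MulEquiv.ulift.toMonoidHom
    | false => inr.comp MulEquiv.ulift.toMonoidHom

theorem toCoprodI_inl (a : G₁) : toCoprodI (inl a : Coprod G₁ G₂) = CoprodI.of (i := true) ⟨a⟩ :=
  rfl

theorem ofCoprodI_toCoprodI (g : Coprod G₁ G₂) : ofCoprodI (toCoprodI g) = g := by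
  suffices ofCoprodI.comp toCoprodI = MonoidHom.id (Coprod G₁ G₂) from
    DFunLike.congr_fun this g
  ext <;> rfl

theorem exists_eq_inl_of_mul_inl_mul_inv_eq_inl {g : Coprod G₁ G₂} {x y : G₁} (hx : x ≠ 1)
    (h : g * inl x * g⁻¹ = inl y) : ∃ z, g = inl z := by
  obtain ⟨z, hz⟩ := CoprodI.exists_eq_of_of_mul_of_mul_inv_eq_of (i := true)
    (g := toCoprodI g) (x := ULift.up x) (y := ULift.up y) (mt (congrArg ULift.down) hx)
    (by rw [← toCoprodI_inl, ← toCoprodI_inl, ← map_inv, ← map_mul, ← map_mul, h])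
  exact ⟨z.down, by rw [← ofCoprodI_toCoprodI g, hz]; rfl⟩

end Monoid.Coprod

/-- If H is almost malnormal in G₁, then H is almost malnormal in the free product G₁ ∗ G₂. -/
theorem stmt_3 {G₁ G₂ : Type*} [Group G₁] [Group G₂] (H : Subgroup G₁)
    (hmal : ∀ g : G₁, g ∉ H → {h : G₁ | h ∈ H ∧ g * h * g⁻¹ ∈ H}.Finite) :
    ∀ g : Coprod G₁ G₂, g ∉ H.map (Coprod.inl : G₁ →* Coprod G₁ G₂) →
      {h : Coprod G₁ G₂ | h ∈ H.map (Coprod.inl : G₁ →* Coprod G₁ G₂) ∧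
        g * h * g⁻¹ ∈ H.map (Coprod.inl : G₁ →* Coprod G₁ G₂)}.Finite := by
  intro g hg
  by_cases hg₁ : ∃ a, g = Coprod.inl a
  · obtain ⟨a, rfl⟩ := hg₁
    have ha : a ∉ H := fun ha => hg (H.mem_map_of_mem _ ha)
    refine ((hmal a ha).image Coprod.inl).subset ?_
    rintro _ ⟨⟨x, hxH, rfl⟩, ⟨y, hyH, hy⟩⟩
    refine ⟨x, ⟨hxH, ?_⟩, rfl⟩
    have hconj : a * x * a⁻¹ = y := Coprod.inl_injective (by rw [hy, map_mul, map_mul, map_inv])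
    exact hconj ▸ hyH
  · refine (Set.finite_singleton 1).subset ?_
    rintro _ ⟨⟨x, -, rfl⟩, ⟨y, -, hy⟩⟩
    by_contra hx
    exact hg₁ (Coprod.exists_eq_inl_of_mul_inl_mul_inv_eq_inl (by rintro rfl; simp at hx) hy.symm)
end

section
/- Let F be the free group on generators a, b, H = ⟨a⟩, and for m ≥ 1 define W_m = {w ∈ F \ H : initial a-exponent of w has absolute value < m}, and V_m = (F \ H) \ (W_m ∪ W_m⁻¹). Then for all g₁, g₂ ∈ F \ H there exists m₁ such that for every m > m₁, g₁V_m ∩ V_m g₂ = ∅. -/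
/-- The initial `a`-exponent of a reduced word in the free group on `Bool`,
where `a = FreeGroup.of true`: the signed length of the maximal initial run of
`a`-letters in the reduced word. -/
def initExp (w : FreeGroup Bool) : ℤ :=
  ((w.toWord.takeWhile (fun p => p.1)).map (fun p => if p.2 then (1 : ℤ) else -1)).sum

/-- `W m`: elements of `F \ ⟨a⟩` whose maximal initial `a`-power `aᵏ` has `|k| < m`. -/
def Wm (m : ℕ) : Set (FreeGroup Bool) :=
  {w | w ∉ Subgroup.zpowers (FreeGroup.of true) ∧ |initExp w| < (m : ℤ)}

/-- `V m = (F \ H) \ (W m ∪ (W m)⁻¹)`. -/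
def Vm (m : ℕ) : Set (FreeGroup Bool) :=
  {w | w ∉ Subgroup.zpowers (FreeGroup.of true)} \ (Wm m ∪ (Wm m)⁻¹)

/-! Every `w ∉ ⟨a⟩` factors as `a ^ p * c * a ^ q` where the reduced word of `c` is nonempty and
begins and ends with a `b`-letter; then `initExp w = p` and `initExp w⁻¹ = -q`. In a product
`w₁ * w₂` the two middle powers merge into `a ^ (s + p)`, and when `s + p ≠ 0` nothing cancels, so
`initExp (w₁ * w₂) = initExp w₁`. Elements `v` of `V m` have `|initExp v|, |initExp v⁻¹| ≥ m`;
hence for `m > g₁.norm + g₂.norm` an equation `g₁ * v = u * g₂` forces `initExp g₁ = initExp u`,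
whose absolute values are `≤ g₁.norm < m` and `≥ m` respectively. -/

open FreeGroup

namespace FreeGroup

variable {α : Type*}

theorem isReduced_append {L₁ L₂ : List (α × Bool)} (h₁ : IsReduced L₁) (h₂ : IsReduced L₂)
    (h : ∀ x ∈ L₁.getLast?, ∀ y ∈ L₂.head?, x.1 ≠ y.1) : IsReduced (L₁ ++ L₂) :=
  List.isChain_append.mpr ⟨h₁, h₂, fun x hx y hy hxy => absurd hxy (h x hx y hy)⟩

theorem mk_mem_zpowers_of {x : α} {L : List (α × Bool)} (h : ∀ y ∈ L, y.1 = x) :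
    mk L ∈ Subgroup.zpowers (of x) := by
  induction L with
  | nil => exact Subgroup.one_mem _
  | cons y L ih =>
    rw [← List.singleton_append, ← mul_mk]
    refine Subgroup.mul_mem _ ?_ (ih fun z hz => h z (List.mem_cons_of_mem y hz))
    obtain ⟨x', b⟩ := y
    obtain rfl : x' = x := h _ List.mem_cons_self
    cases b
    · exact Subgroup.inv_mem _ (Subgroup.mem_zpowers (of x'))
    · exact Subgroup.mem_zpowers (of x')

variable [DecidableEq α]

theorem toWord_mul_of_fst_ne {x y : FreeGroup α}
    (h : ∀ u ∈ x.toWord.getLast?, ∀ v ∈ y.toWord.head?, u.1 ≠ v.1) :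
    (x * y).toWord = x.toWord ++ y.toWord := by
  rw [toWord_mul, (isReduced_append isReduced_toWord isReduced_toWord h).reduce_eq]

theorem toWord_of_zpow (x : α) (n : ℤ) :
    (of x ^ n).toWord = List.replicate n.natAbs (x, decide (0 < n)) := by
  rcases n with n | n
  · rw [Int.ofNat_eq_natCast, zpow_natCast, toWord_of_pow]
    rcases n with _ | n <;> simp; omega
  · simp [zpow_negSucc, toWord_inv, toWord_of_pow, invRev, List.map_replicate]

theorem fst_eq_of_mem_toWord_of_zpow {x : α} {n : ℤ} {y : α × Bool}
    (hy : y ∈ (of x ^ n).toWord) : y.1 = x := by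
  rw [toWord_of_zpow] at hy
  rw [List.eq_of_mem_replicate hy]

end FreeGroup

def IsBBounded (c : FreeGroup Bool) : Prop :=
  c ≠ 1 ∧ (∀ x ∈ c.toWord.head?, x.1 = false) ∧ ∀ x ∈ c.toWord.getLast?, x.1 = false

namespace IsBBounded

variable {c d : FreeGroup Bool}

theorem toWord_ne_nil (hc : IsBBounded c) : c.toWord ≠ [] :=
  toWord_eq_nil_iff.not.mpr hc.1

theorem inv (hc : IsBBounded c) : IsBBounded c⁻¹ := by
  refine ⟨inv_ne_one.mpr hc.1, ?_, ?_⟩ <;>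
    simp only [toWord_inv, invRev, List.head?_reverse, List.getLast?_reverse,
      List.getLast?_map, List.head?_map, Option.mem_def, Option.map_eq_some_iff]
  · rintro _ ⟨x, hx, rfl⟩
    exact hc.2.2 x hx
  · rintro _ ⟨x, hx, rfl⟩
    exact hc.2.1 x hx

theorem toWord_mul_zpow (hc : IsBBounded c) (n : ℤ) :
    (c * of true ^ n).toWord = c.toWord ++ (of true ^ n).toWord := by
  refine toWord_mul_of_fst_ne fun u hu v hv => ?_
  rw [hc.2.2 u hu, fst_eq_of_mem_toWord_of_zpow (List.mem_of_mem_head? hv)]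
  decide

theorem toWord_zpow_mul (hc : IsBBounded c) (n : ℤ) :
    (of true ^ n * c).toWord = (of true ^ n).toWord ++ c.toWord := by
  refine toWord_mul_of_fst_ne fun u hu v hv => ?_
  rw [hc.2.1 v hv, fst_eq_of_mem_toWord_of_zpow (List.mem_of_mem_getLast? hu)]
  decide

theorem toWord_zpow_mul_mul (hc : IsBBounded c) (p q : ℤ) :
    (of true ^ p * c * of true ^ q).toWord =
      (of true ^ p).toWord ++ c.toWord ++ (of true ^ q).toWord := by
  rw [← hc.toWord_zpow_mul p]
  refine toWord_mul_of_fst_ne fun u hu v hv => ?_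
  rw [hc.toWord_zpow_mul, List.getLast?_append_of_ne_nil _ hc.toWord_ne_nil] at hu
  rw [hc.2.2 u hu, fst_eq_of_mem_toWord_of_zpow (List.mem_of_mem_head? hv)]
  decide

theorem mul_zpow_mul (hc : IsBBounded c) (hd : IsBBounded d) {n : ℤ} (hn : n ≠ 0) :
    IsBBounded (c * of true ^ n * d) := by
  have hN : (of true ^ n).toWord ≠ [] := by simp [toWord_of_zpow, hn]
  have hword : (c * of true ^ n * d).toWord = c.toWord ++ (of true ^ n).toWord ++ d.toWord := by
    rw [← hc.toWord_mul_zpow n]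
    refine toWord_mul_of_fst_ne fun u hu v hv => ?_
    rw [hc.toWord_mul_zpow, List.getLast?_append_of_ne_nil _ hN] at hu
    rw [hd.2.1 v hv, fst_eq_of_mem_toWord_of_zpow (List.mem_of_mem_getLast? hu)]
    decide
  refine ⟨fun h => ?_, ?_, ?_⟩
  · rw [h, toWord_one, eq_comm, List.append_eq_nil_iff, List.append_eq_nil_iff] at hword
    exact hN hword.1.2
  · rw [hword, List.append_assoc, List.head?_append_of_ne_nil _ hc.toWord_ne_nil]
    exact hc.2.1
  · rw [hword, List.getLast?_append_of_ne_nil _ hd.toWord_ne_nil]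
    exact hd.2.2

end IsBBounded

theorem initExp_zpow_mul_mul {c : FreeGroup Bool} (hc : IsBBounded c) (p q : ℤ) :
    initExp (of true ^ p * c * of true ^ q) = p := by
  obtain ⟨y, C, hC⟩ := List.exists_cons_of_ne_nil hc.toWord_ne_nil
  have hy : y.1 = false := hc.2.1 y (by simp [hC])
  rw [initExp, hc.toWord_zpow_mul_mul, List.append_assoc,
    List.takeWhile_append_of_pos fun x hx => by rw [fst_eq_of_mem_toWord_of_zpow hx],
    hC, List.cons_append, List.takeWhile_cons_of_neg (by simp [hy]), List.append_nil,
    toWord_of_zpow, List.map_replicate, List.sum_replicate]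
  by_cases hp : 0 < p
  · simp [hp, hp.le]
  · simp [hp, abs_of_nonpos (not_lt.mp hp)]

theorem initExp_inv_zpow_mul_mul {c : FreeGroup Bool} (hc : IsBBounded c) (p q : ℤ) :
    initExp (of true ^ p * c * of true ^ q)⁻¹ = -q := by
  rw [show (of true ^ p * c * of true ^ q)⁻¹ = of true ^ (-q) * c⁻¹ * of true ^ (-p) by group]
  exact initExp_zpow_mul_mul hc.inv _ _

theorem exists_eq_zpow_mul_mul {w : FreeGroup Bool} (hw : w ∉ Subgroup.zpowers (of true)) :
    ∃ (p : ℤ) (c : FreeGroup Bool) (q : ℤ), IsBBounded c ∧ w = of true ^ p * c * of true ^ q := by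
  set isA : Bool × Bool → Bool := fun x => x.1
  set A := w.toWord.takeWhile isA
  set M := w.toWord.dropWhile isA
  set C := M.rdropWhile isA
  set B := M.rtakeWhile isA
  have hM : M ≠ [] := by
    refine fun hM => hw ?_
    rw [← mk_toWord (x := w)]
    exact mk_mem_zpowers_of (List.dropWhile_eq_nil_iff.mp hM)
  have hC : C ≠ [] := fun h => by
    rw [List.rdropWhile_eq_nil_iff] at h
    exact Bool.false_ne_true ((List.head_dropWhile_not isA hM).symm.trans (h _ (List.head_mem hM)))
  have hword : w.toWord = A ++ C ++ B := by
    rw [List.append_assoc, List.rdropWhile_append_rtakeWhile, List.takeWhile_append_dropWhile]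
  have hCword : (mk C).toWord = C := (isReduced_toWord.infix ⟨A, B, hword.symm⟩).reduce_eq
  obtain ⟨p, hp⟩ := Subgroup.mem_zpowers_iff.mp <|
    mk_mem_zpowers_of (L := A) fun y hy => List.mem_takeWhile_imp hy
  obtain ⟨q, hq⟩ := Subgroup.mem_zpowers_iff.mp <|
    mk_mem_zpowers_of (L := B) fun y hy => List.mem_rtakeWhile_imp hy
  refine ⟨p, mk C, q, ⟨?_, ?_, ?_⟩, ?_⟩
  · rwa [Ne, ← toWord_eq_nil_iff, hCword]
  · rw [hCword, List.head?_eq_some_head hC, (List.rdropWhile_prefix isA M).head hC]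
    rintro x ⟨⟩
    simpa using List.head_dropWhile_not isA hM
  · rw [hCword, List.getLast?_eq_some_getLast hC]
    rintro x ⟨⟩
    simpa using List.rdropWhile_last_not isA M hC
  · rw [hp, hq, mul_mk, mul_mk, ← hword, mk_toWord]

theorem initExp_mul_of_ne {w₁ w₂ : FreeGroup Bool}
    (h₁ : w₁ ∉ Subgroup.zpowers (of true)) (h₂ : w₂ ∉ Subgroup.zpowers (of true))
    (h : initExp w₂ ≠ initExp w₁⁻¹) : initExp (w₁ * w₂) = initExp w₁ := by
  obtain ⟨r, c, s, hc, rfl⟩ := exists_eq_zpow_mul_mul h₁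
  obtain ⟨p, d, q, hd, rfl⟩ := exists_eq_zpow_mul_mul h₂
  rw [initExp_zpow_mul_mul hd, initExp_inv_zpow_mul_mul hc] at h
  have hsp : s + p ≠ 0 := by omega
  rw [initExp_zpow_mul_mul hc, show of true ^ r * c * of true ^ s * (of true ^ p * d * of true ^ q)
      = of true ^ r * (c * of true ^ (s + p) * d) * of true ^ q by group,
    initExp_zpow_mul_mul (hc.mul_zpow_mul hd hsp)]

theorem abs_initExp_le_norm (w : FreeGroup Bool) : |initExp w| ≤ w.norm := by
  set l := (w.toWord.takeWhile (·.1)).map fun x => if x.2 then (1 : ℤ) else -1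
  have hsigns : ∀ x ∈ l, -1 ≤ x ∧ x ≤ 1 := by
    simp only [l, List.mem_map]
    rintro _ ⟨x, -, rfl⟩
    split <;> norm_num
  have hlen : l.length ≤ w.norm := by
    simpa [l, FreeGroup.norm] using (List.takeWhile_prefix _).length_le
  have hle := l.sum_le_card_nsmul 1 fun x hx => (hsigns x hx).2
  have hge := l.card_nsmul_le_sum (-1) fun x hx => (hsigns x hx).1
  rw [initExp, abs_le]
  simp only [nsmul_eq_mul, mul_one, mul_neg] at hle hge
  constructor <;> linarith [(Nat.cast_le (α := ℤ)).mpr hlen]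

theorem mem_Vm_iff {m : ℕ} {v : FreeGroup Bool} :
    v ∈ Vm m ↔
      v ∉ Subgroup.zpowers (of true) ∧ (m : ℤ) ≤ |initExp v| ∧ (m : ℤ) ≤ |initExp v⁻¹| := by
  simp only [Vm, Wm, Set.mem_sdiff, Set.mem_union, Set.mem_inv, Set.mem_ofPred_eq,
    Subgroup.inv_mem_iff, not_or, not_and, not_lt]
  tauto

/-- Condition (H2) for the pair `⟨a⟩ < F₂`: for all `g₁, g₂ ∈ F \ ⟨a⟩` there is `m₁`
such that `g₁ V m ∩ V m g₂ = ∅` for every `m > m₁`. -/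
theorem stmt_19 (g₁ g₂ : FreeGroup Bool)
    (h₁ : g₁ ∉ Subgroup.zpowers (FreeGroup.of true))
    (h₂ : g₂ ∉ Subgroup.zpowers (FreeGroup.of true)) :
    ∃ m₁ : ℕ, ∀ m : ℕ, m₁ < m →
      {x : FreeGroup Bool | ∃ v ∈ Vm m, x = g₁ * v} ∩
      {x : FreeGroup Bool | ∃ v ∈ Vm m, x = v * g₂} = ∅ := by
  refine ⟨g₁.norm + g₂.norm, fun m hm => Set.eq_empty_of_forall_notMem ?_⟩
  rintro _ ⟨⟨v, hv, rfl⟩, ⟨u, hu, hvu⟩⟩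
  obtain ⟨hvH, hv, -⟩ := mem_Vm_iff.mp hv
  obtain ⟨huH, hu, hu'⟩ := mem_Vm_iff.mp hu
  have hg₁ := abs_initExp_le_norm g₁
  have hg₁' := abs_initExp_le_norm g₁⁻¹
  have hg₂ := abs_initExp_le_norm g₂
  rw [norm_inv_eq] at hg₁'
  have hm : (g₁.norm : ℤ) + g₂.norm < m := by exact_mod_cast hm
  have hleft : initExp (g₁ * v) = initExp g₁ :=
    initExp_mul_of_ne h₁ hvH fun h => by rw [h] at hv; omega
  have hright : initExp (u * g₂) = initExp u :=
    initExp_mul_of_ne huH h₂ fun h => by rw [← h] at hu'; omega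
  rw [hvu, hright] at hleft
  rw [hleft] at hu
  omega
end
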